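/- arXiv:2101.02248 — 3 statements merged into one kernel-verified Lean document; each statement's English description precedes it below -/
import Mathlib

section
/- There exist positive constants a and b such that for all sufficiently large x, a·x·log x ≤ ∑_{n ≤ x} φ(⌊x/n⌋) ≤ b·x·log x. -/
/-!
The upper bound follows from `φ m ≤ m` and `∑_{n ≤ N} N / n ≤ N (1 + log N)`.

For the lower bound, group the `n ≤ N` by the value `m = ⌊N / n⌋`: it is taken
`⌊N / m⌋ - ⌊N / (m + 1)⌋ ≥ N / (2 m (m + 1))` times as long as `m ≤ √N / 2`, so the sum is at least
`(N / 2) ∑_{m ≤ √N / 2} φ(m) / (m (m + 1))`. The identity `∑_{m ≤ k} φ(m) ⌊k / m⌋ = k (k + 1) / 2`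
shows that the partial sums of `φ(m) / m` are at least `k / 2`, and Abel summation against the
decreasing weights `1 / (m + 1)` then bounds the last sum below by a harmonic sum,
`≥ log (√N / 2) / 4`.
-/

open Finset Filter
open scoped Nat

theorem Finset.sum_Icc_one_eq_sum_range {M : Type*} [AddCommMonoid M] (f : ℕ → M) (n : ℕ) :
    ∑ m ∈ Icc 1 n, f m = ∑ i ∈ range n, f (i + 1) := by
  rw [← Ico_add_one_right_eq_Icc, sum_Ico_eq_sum_range, Nat.add_sub_cancel]
  simp only [add_comm]

theorem Finset.sum_mul_le_sum_mul_of_sum_range_le {a b w : ℕ → ℝ} {n : ℕ} (hw : Antitone w)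
    (hw₀ : ∀ i, 0 ≤ w i) (hab : ∀ k ≤ n, ∑ i ∈ range k, a i ≤ ∑ i ∈ range k, b i) :
    ∑ i ∈ range n, a i * w i ≤ ∑ i ∈ range n, b i * w i := by
  have hC : ∀ k ≤ n, 0 ≤ ∑ i ∈ range k, (b i - a i) := fun k hk => by
    simpa [sum_sub_distrib] using hab k hk
  suffices 0 ≤ ∑ i ∈ range n, w i • (b i - a i) by
    simpa [smul_eq_mul, mul_sub, sum_sub_distrib, mul_comm] using this
  rw [sum_range_by_parts]
  refine sub_nonneg_of_le (le_trans (sum_nonpos fun i hi => ?_) ?_)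
  · exact smul_nonpos_of_nonpos_of_nonneg (sub_nonpos.2 (hw (Nat.le_succ i)))
      (hC _ (by simp at hi; omega))
  · exact smul_nonneg (hw₀ _) (hC n le_rfl)

theorem Nat.filter_Icc_div_eq {N m : ℕ} (hm : 0 < m) :
    {n ∈ Icc 1 N | N / n = m} = Ioc (N / (m + 1)) (N / m) := by
  ext n
  simp only [mem_filter, mem_Icc, mem_Ioc, Nat.div_lt_iff_lt_mul (Nat.succ_pos m),
    Nat.le_div_iff_mul_le hm]
  constructor
  · rintro ⟨⟨hn, -⟩, rfl⟩
    exact ⟨Nat.lt_mul_div_succ N hn, Nat.mul_div_le N n⟩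
  · rintro ⟨hlt, hle⟩
    have hn : 0 < n := Nat.pos_of_ne_zero (by rintro rfl; simp at hlt)
    refine ⟨⟨hn, le_trans (Nat.le_mul_of_pos_right n hm) hle⟩, le_antisymm ?_ ?_⟩
    · exact Nat.lt_succ_iff.1 ((Nat.div_lt_iff_lt_mul hn).2 (by linarith [mul_comm n (m + 1)]))
    · exact (Nat.le_div_iff_mul_le hn).2 (by linarith [mul_comm n m])

theorem Finset.sum_Icc_one_comp_div {M : Type*} [AddCommMonoid M] (f : ℕ → M) (N : ℕ) :
    ∑ n ∈ Icc 1 N, f (N / n) = ∑ m ∈ Icc 1 N, (N / m - N / (m + 1)) • f m := by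
  rw [← sum_fiberwise_of_maps_to (g := (N / ·)) (t := Icc 1 N)]
  · refine sum_congr rfl fun m hm => ?_
    rw [sum_congr rfl fun n hn => congrArg f (mem_filter.1 hn).2, sum_const,
      Nat.filter_Icc_div_eq (mem_Icc.1 hm).1, Nat.card_Ioc]
  · intro n hn
    simp only [mem_Icc] at hn ⊢
    exact ⟨Nat.div_pos hn.2 hn.1, Nat.div_le_self N n⟩

theorem Nat.sum_totient_mul_div (N : ℕ) : ∑ m ∈ Icc 1 N, φ m * (N / m) = ∑ n ∈ Icc 1 N, n := by
  have h := ArithmeticFunction.sum_Ioc_mul_zeta_eq_sum (R := ℕ) ⟨φ, totient_zero⟩ N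
  erw [sum_congr rfl fun n _ => ArithmeticFunction.coe_mul_zeta_apply] at h
  simp only [ArithmeticFunction.coe_mk, sum_totient, Nat.cast_id] at h
  exact h.symm

theorem Nat.half_le_sum_totient_div (k : ℕ) : (k : ℝ) / 2 ≤ ∑ m ∈ Icc 1 k, (φ m : ℝ) / m := by
  have gauss : ∑ n ∈ Icc 1 k, (n : ℝ) = k * (k + 1) / 2 := by
    induction k with
    | zero => simp
    | succ k ih => rw [sum_Icc_succ_top (by omega), ih]; push_cast; ring
  have key : (k : ℝ) * (k + 1) / 2 ≤ k * ∑ m ∈ Icc 1 k, (φ m : ℝ) / m :=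
    calc (k : ℝ) * (k + 1) / 2 = ∑ m ∈ Icc 1 k, (φ m : ℝ) * (k / m : ℕ) := by
          rw [← gauss, ← cast_sum, ← sum_totient_mul_div k]; push_cast; rfl
      _ ≤ ∑ m ∈ Icc 1 k, (φ m : ℝ) * (k / m) :=
          sum_le_sum fun m _ => mul_le_mul_of_nonneg_left cast_div_le (by positivity)
      _ = k * ∑ m ∈ Icc 1 k, (φ m : ℝ) / m := by
          rw [mul_sum]; exact sum_congr rfl fun m _ => by ring
  rcases k.eq_zero_or_pos with rfl | hk
  · simp
  have hk' : (0 : ℝ) < k := by exact_mod_cast hk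
  nlinarith

theorem Nat.log_add_one_div_four_le_sum_totient_div_mul_succ (M : ℕ) :
    Real.log (M + 1) / 4 ≤ ∑ m ∈ Icc 1 M, (φ m : ℝ) / (m * (m + 1)) := by
  have abel : ∑ i ∈ range M, (1 / 2 : ℝ) * (1 / (i + 2))
      ≤ ∑ i ∈ range M, (φ (i + 1) : ℝ) / (i + 1) * (1 / (i + 2)) := by
    refine sum_mul_le_sum_mul_of_sum_range_le (fun i j hij => ?_) (fun i => by positivity)
      fun k _ => ?_
    · gcongr
    · simpa [sum_Icc_one_eq_sum_range, div_eq_mul_inv, mul_comm] using half_le_sum_totient_div k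
  calc Real.log (M + 1) / 4 ≤ harmonic M / 4 := by
        gcongr; exact_mod_cast log_add_one_le_harmonic M
    _ = ∑ i ∈ range M, (1 / 4 : ℝ) * (1 / (i + 1)) := by
        simp [harmonic, mul_sum, div_eq_inv_mul]
    _ ≤ ∑ i ∈ range M, (1 / 2 : ℝ) * (1 / (i + 2)) := sum_le_sum fun i _ => by
        rw [one_div_mul_one_div, one_div_mul_one_div]
        exact one_div_le_one_div_of_le (by positivity) (by linarith)
    _ ≤ _ := abel
    _ = _ := by
        rw [sum_Icc_one_eq_sum_range]
        push_cast
        exact sum_congr rfl fun i _ => by field_simp; ring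

theorem Nat.div_le_div_sub_div_succ {N m : ℕ} (hm : 0 < m) (h : 2 * (m * (m + 1)) ≤ N) :
    (N : ℝ) / (2 * (m * (m + 1))) ≤ ((N / m - N / (m + 1) : ℕ) : ℝ) := by
  rw [Nat.cast_sub (Nat.div_le_div_left (Nat.le_succ m) hm)]
  have h₁ : (N : ℝ) / m - 1 < (N / m : ℕ) := by
    rw [← Nat.floor_div_eq_div (K := ℝ)]; exact Nat.sub_one_lt_floor _
  have h₂ : ((N / (m + 1) : ℕ) : ℝ) ≤ N / (m + 1) := by exact_mod_cast Nat.cast_div_le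
  have h₃ : (N : ℝ) / m - N / (m + 1) = 2 * (N / (2 * (m * (m + 1)))) := by
    field_simp; ring
  have h₄ : 1 ≤ (N : ℝ) / (2 * (m * (m + 1))) := by
    rw [one_le_div (by positivity)]; exact_mod_cast h
  linarith

theorem Nat.half_mul_sum_totient_div_mul_succ_le {N M : ℕ} (hM : 4 * M ^ 2 ≤ N) :
    N / 2 * ∑ m ∈ Icc 1 M, (φ m : ℝ) / (m * (m + 1)) ≤ ∑ n ∈ Icc 1 N, (φ (N / n) : ℝ) :=
  calc N / 2 * ∑ m ∈ Icc 1 M, (φ m : ℝ) / (m * (m + 1))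
      ≤ ∑ m ∈ Icc 1 M, ((N / m - N / (m + 1) : ℕ) : ℝ) * φ m := by
        rw [mul_sum]
        refine sum_le_sum fun m hm => ?_
        obtain ⟨hm, hmM⟩ := mem_Icc.1 hm
        have := div_le_div_sub_div_succ (N := N) hm (by nlinarith)
        calc (N : ℝ) / 2 * ((φ m : ℝ) / (m * (m + 1))) = N / (2 * (m * (m + 1))) * φ m := by
              field_simp
          _ ≤ _ := by gcongr
    _ ≤ ∑ m ∈ Icc 1 N, ((N / m - N / (m + 1) : ℕ) : ℝ) * φ m :=
        sum_le_sum_of_subset_of_nonneg (Icc_subset_Icc_right (by nlinarith))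
          fun _ _ _ => by positivity
    _ = _ := by simp only [sum_Icc_one_comp_div (fun m => (φ m : ℝ)), nsmul_eq_mul]

theorem Nat.mul_log_div_le_sum_totient_div {N : ℕ} (hN : 16 ≤ N) :
    N * Real.log N / 32 ≤ ∑ n ∈ Icc 1 N, (φ (N / n) : ℝ) := by
  have hMN : 4 * Nat.sqrt (N / 4) ^ 2 ≤ N := by have := Nat.sqrt_le' (N / 4); omega
  have hNM : N < 4 * (Nat.sqrt (N / 4) + 1) ^ 2 := by
    have := Nat.lt_succ_sqrt' (N / 4)
    rw [Nat.succ_eq_add_one] at this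
    omega
  set M := Nat.sqrt (N / 4)
  have hlog : Real.log N / 4 ≤ Real.log (M + 1) := by
    have h16 : Real.log 16 ≤ Real.log N := Real.log_le_log (by norm_num) (by exact_mod_cast hN)
    have h4 : Real.log 16 = 2 * Real.log 4 := by
      rw [show (16 : ℝ) = 4 ^ 2 by norm_num, Real.log_pow]; norm_num
    have h : Real.log N < Real.log (4 * (M + 1) ^ 2) :=
      Real.log_lt_log (by exact_mod_cast (by omega : 0 < N)) (by exact_mod_cast hNM)
    rw [Real.log_mul (by norm_num) (by positivity), Real.log_pow] at h
    push_cast at h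
    linarith
  calc N * Real.log N / 32 ≤ N / 2 * (Real.log (M + 1) / 4) := by
        nlinarith [(Nat.cast_nonneg N : (0 : ℝ) ≤ N)]
    _ ≤ N / 2 * ∑ m ∈ Icc 1 M, (φ m : ℝ) / (m * (m + 1)) := by
        gcongr; exact log_add_one_div_four_le_sum_totient_div_mul_succ M
    _ ≤ _ := half_mul_sum_totient_div_mul_succ_le hMN

theorem Nat.sum_totient_div_le (N : ℕ) : ∑ n ∈ Icc 1 N, (φ (N / n) : ℝ) ≤ N * (1 + Real.log N) :=
  calc ∑ n ∈ Icc 1 N, (φ (N / n) : ℝ) ≤ ∑ n ∈ Icc 1 N, (N : ℝ) / n :=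
        sum_le_sum fun n _ => (Nat.cast_le.2 (totient_le _)).trans cast_div_le
    _ = N * harmonic N := by
        rw [harmonic_eq_sum_Icc]; push_cast; simp [mul_sum, div_eq_mul_inv]
    _ ≤ N * (1 + Real.log N) := by gcongr; exact harmonic_le_one_add_log N

theorem mul_log_le_four_mul_floor_mul_log {x : ℝ} (hx : 2 ≤ x) :
    x * Real.log x ≤ 4 * (⌊x⌋₊ * Real.log ⌊x⌋₊) := by
  have hN : (2 : ℝ) ≤ ⌊x⌋₊ := by exact_mod_cast Nat.le_floor (by exact_mod_cast hx)
  have hx2 : x ≤ 2 * ⌊x⌋₊ := by linarith [Nat.lt_floor_add_one x]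
  have hlog : Real.log x ≤ 2 * Real.log ⌊x⌋₊ := by
    calc Real.log x ≤ Real.log (2 * ⌊x⌋₊) := Real.log_le_log (by linarith) hx2
      _ = Real.log 2 + Real.log ⌊x⌋₊ := Real.log_mul two_ne_zero (by positivity)
      _ ≤ 2 * Real.log ⌊x⌋₊ := by linarith [Real.log_le_log two_pos hN]
  have : 0 ≤ Real.log x := Real.log_nonneg (by linarith)
  nlinarith

theorem sum_totient_floor_div_bounds :
    ∃ a > (0 : ℝ), ∃ b > (0 : ℝ), ∀ᶠ x : ℝ in atTop,
      a * x * Real.log x ≤ ∑ n ∈ Finset.Icc 1 ⌊x⌋₊, (Nat.totient ⌊x / (n : ℝ)⌋₊ : ℝ) ∧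
      ∑ n ∈ Finset.Icc 1 ⌊x⌋₊, (Nat.totient ⌊x / (n : ℝ)⌋₊ : ℝ) ≤ b * x * Real.log x := by
  refine ⟨1 / 128, by norm_num, 2, by norm_num, ?_⟩
  filter_upwards [eventually_ge_atTop 16] with x hx
  have hN : 16 ≤ ⌊x⌋₊ := Nat.le_floor (by exact_mod_cast hx)
  have hlog : 1 ≤ Real.log x := by
    rw [Real.le_log_iff_exp_le (by linarith)]; linarith [Real.exp_one_lt_d9]
  simp only [Nat.floor_div_natCast]
  constructor
  · linarith [Nat.mul_log_div_le_sum_totient_div hN,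
      mul_log_le_four_mul_floor_mul_log (x := x) (by linarith)]
  · calc _ ≤ ⌊x⌋₊ * (1 + Real.log ⌊x⌋₊) := Nat.sum_totient_div_le _
      _ ≤ x * (1 + Real.log x) := by
          have hNx : (⌊x⌋₊ : ℝ) ≤ x := Nat.floor_le (by linarith)
          gcongr
      _ ≤ 2 * x * Real.log x := by nlinarith
end

section
/- For x ≥ 2, the partial sum ∑_{n ≤ x} μ²(n)/n² equals ζ(2)/ζ(4) + O(1/x), where ζ(2)/ζ(4) = 15/π². -/
/-! Every `n ≥ 1` is uniquely `b ^ 2 * a` with `a` squarefree, so for a completely multiplicative,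
absolutely summable `f` we get `∑ f n = (∑ f (b ^ 2)) * ∑_{a squarefree} f a`. For `f n = n⁻²` this
reads `ζ(2) = ζ(4) ∑ μ²(n) / n²`, so the full series is `ζ(2) / ζ(4) = 15 / π²`. The error of the
partial sum up to `x` is minus the tail beyond `⌊x⌋`, which is at most
`∑_{n > ⌊x⌋} n⁻² ≤ 1 / ⌊x⌋ ~ 1 / x`. -/

open Finset Filter Asymptotics Real

theorem Nat.eq_and_eq_of_sq_mul_squarefree {b₁ a₁ b₂ a₂ : ℕ} (hb₁ : b₁ ≠ 0) (hb₂ : b₂ ≠ 0)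
    (ha₁ : Squarefree a₁) (ha₂ : Squarefree a₂) (h : b₁ ^ 2 * a₁ = b₂ ^ 2 * a₂) :
    b₁ = b₂ ∧ a₁ = a₂ := by
  have hfactorization : ∀ p, a₁.factorization p = a₂.factorization p ∧
      b₁.factorization p = b₂.factorization p := by
    intro p
    have hp := congrArg (·.factorization p) h
    simp only [Nat.factorization_mul (pow_ne_zero 2 hb₁) ha₁.ne_zero,
      Nat.factorization_mul (pow_ne_zero 2 hb₂) ha₂.ne_zero, Nat.factorization_pow,
      Finsupp.add_apply, Finsupp.smul_apply, smul_eq_mul] at hp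
    have := ha₁.natFactorization_le_one p
    have := ha₂.natFactorization_le_one p
    omega
  exact ⟨Nat.eq_of_factorization_eq hb₁ hb₂ fun p => (hfactorization p).2,
    Nat.eq_of_factorization_eq ha₁.ne_zero ha₂.ne_zero fun p => (hfactorization p).1⟩

theorem tsum_sq_mul_tsum_squarefree {R : Type*} [NormedCommRing R] [CompleteSpace R]
    {f : ℕ → R} (hf : Summable (‖f ·‖)) (h0 : f 0 = 0)
    (hmul : ∀ m n, f (m * n) = f m * f n) :
    (∑' b, f (b ^ 2)) * ∑' a, (if Squarefree a then f a else 0) = ∑' n, f n := by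
  set g : ℕ → R := fun a => if Squarefree a then f a else 0
  have hsq : Summable fun b => ‖f (b ^ 2)‖ :=
    hf.comp_injective (Nat.pow_left_injective two_ne_zero)
  have hg : Summable (‖g ·‖) :=
    hf.of_nonneg_of_le (fun _ => norm_nonneg _) fun a => by
      by_cases ha : Squarefree a <;> simp [g, ha]
  have hsupp : ∀ p ∈ Function.support fun p : ℕ × ℕ => f (p.1 ^ 2) * g p.2,
      p.1 ≠ 0 ∧ Squarefree p.2 := by
    rintro ⟨b, a⟩ hp
    refine ⟨?_, by_contra fun ha => hp (by simp [g, ha])⟩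
    rintro (rfl : b = 0)
    exact hp (by simp [h0])
  rw [tsum_mul_tsum_of_summable_norm hsq hg]
  symm
  refine tsum_eq_tsum_of_ne_zero_bij (fun p => p.1.1 ^ 2 * p.1.2) ?_ ?_ ?_
  · rintro ⟨⟨b₁, a₁⟩, h₁⟩ ⟨⟨b₂, a₂⟩, h₂⟩ h
    obtain ⟨hb₁, ha₁⟩ := hsupp _ h₁
    obtain ⟨hb₂, ha₂⟩ := hsupp _ h₂
    obtain ⟨rfl, rfl⟩ := Nat.eq_and_eq_of_sq_mul_squarefree hb₁ hb₂ ha₁ ha₂ h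
    rfl
  · intro n hn
    have hn0 : n ≠ 0 := by rintro rfl; exact hn h0
    obtain ⟨a, b, -, hb, rfl, ha⟩ := Nat.sq_mul_squarefree_of_pos (Nat.pos_of_ne_zero hn0)
    refine ⟨⟨(b, a), ?_⟩, rfl⟩
    simpa [g, ha, ← hmul] using hn
  · rintro ⟨⟨b, a⟩, hp⟩
    simp [g, (hsupp _ hp).2, hmul]

theorem tsum_inv_sq_nat_add_succ_le {N : ℕ} (hN : N ≠ 0) :
    ∑' k : ℕ, (((k + (N + 1) : ℕ) : ℝ) ^ 2)⁻¹ ≤ (N : ℝ)⁻¹ := by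
  refine Real.tsum_le_of_sum_range_le (fun _ => by positivity) fun n => ?_
  calc ∑ k ∈ range n, (((k + (N + 1) : ℕ) : ℝ) ^ 2)⁻¹
      = ∑ i ∈ Ioc N (N + n), ((i : ℝ) ^ 2)⁻¹ := by
        rw [← Ico_add_one_add_one_eq_Ioc, sum_Ico_eq_sum_range]
        exact sum_congr (by congr 1; omega) fun k _ => by rw [add_comm k]
    _ ≤ (N : ℝ)⁻¹ - ((N + n : ℕ) : ℝ)⁻¹ := sum_Ioc_inv_sq_le_sub hN (by omega)
    _ ≤ (N : ℝ)⁻¹ := sub_le_self _ (by positivity)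

theorem abs_sum_Icc_sub_tsum_le {f : ℕ → ℝ} (hf : ∀ n, |f n| ≤ ((n : ℝ) ^ 2)⁻¹)
    {N : ℕ} (hN : N ≠ 0) : |∑ n ∈ Icc 1 N, f n - ∑' n, f n| ≤ (N : ℝ)⁻¹ := by
  have hsum : Summable (|f ·|) :=
    (Real.summable_nat_pow_inv.mpr one_lt_two).of_nonneg_of_le (fun _ => abs_nonneg _) hf
  have htail : Summable fun k => |f (k + (N + 1))| :=
    hsum.comp_injective (add_left_injective (N + 1))
  have h0 : f 0 = 0 := abs_nonpos_iff.mp (by simpa using hf 0)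
  have hIcc : ∑ n ∈ Icc 1 N, f n = ∑ n ∈ range (N + 1), f n := by
    rw [Nat.range_succ_eq_Icc_zero, ← insert_Icc_add_one_left_eq_Icc N.zero_le,
      sum_insert (by simp), h0, zero_add, zero_add]
  rw [hIcc, ← hsum.of_abs.sum_add_tsum_nat_add (N + 1), sub_add_cancel_left, abs_neg]
  calc |∑' k, f (k + (N + 1))| ≤ ∑' k, |f (k + (N + 1))| := by
        simpa only [Real.norm_eq_abs] using
          norm_tsum_le_tsum_norm (f := fun k => f (k + (N + 1))) htail
    _ ≤ ∑' k : ℕ, (((k + (N + 1) : ℕ) : ℝ) ^ 2)⁻¹ :=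
        htail.tsum_le_tsum (fun k => hf _)
          ((Real.summable_nat_pow_inv.mpr one_lt_two).comp_injective (add_left_injective (N + 1)))
    _ ≤ (N : ℝ)⁻¹ := tsum_inv_sq_nat_add_succ_le hN

theorem tsum_squarefree_div_sq :
    ∑' n : ℕ, (if Squarefree n then 1 else 0 : ℝ) / (n : ℝ) ^ 2 = 15 / π ^ 2 := by
  have h := tsum_sq_mul_tsum_squarefree (f := fun n : ℕ => 1 / (n : ℝ) ^ 2)
    (by simp [Real.summable_nat_pow_inv]) (by simp)
    (fun m n => by push_cast; ring)
  simp only [Nat.cast_pow, ← pow_mul, hasSum_zeta_four.tsum_eq, hasSum_zeta_two.tsum_eq] at h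
  simp only [ite_div, zero_div]
  field_simp at h ⊢
  linear_combination h / 6

theorem sum_squarefree_div_sq :
    riemannZeta 2 / riemannZeta 4 = (15 / Real.pi ^ 2 : ℂ) ∧
    (fun x : ℝ => (∑ n ∈ Finset.Icc 1 ⌊x⌋₊,
        ((if Squarefree n then 1 else 0 : ℝ)) / (n : ℝ) ^ 2) -
      15 / Real.pi ^ 2) =O[atTop] (fun x : ℝ => 1 / x) := by
  refine ⟨?_, ?_⟩
  · rw [riemannZeta_two, riemannZeta_four]
    field_simp
    ring
  have hterm (n : ℕ) : |(if Squarefree n then 1 else 0 : ℝ) / (n : ℝ) ^ 2| ≤ ((n : ℝ) ^ 2)⁻¹ := by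
    split_ifs <;> simp
  have herror : (fun x : ℝ => (∑ n ∈ Finset.Icc 1 ⌊x⌋₊,
      ((if Squarefree n then 1 else 0 : ℝ)) / (n : ℝ) ^ 2) - 15 / Real.pi ^ 2)
      =O[atTop] fun x : ℝ => ((⌊x⌋₊ : ℕ) : ℝ)⁻¹ := by
    refine IsBigO.of_bound' ?_
    filter_upwards [eventually_ge_atTop (1 : ℝ)] with x hx
    rw [← tsum_squarefree_div_sq, Real.norm_eq_abs, Real.norm_eq_abs, abs_inv, Nat.abs_cast]
    exact abs_sum_Icc_sub_tsum_le hterm (Nat.floor_pos.mpr hx).ne'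
  exact (herror.trans isEquivalent_nat_floor.inv.isBigO).congr_right fun x => (one_div x).symm
end

section
/- For a large real number x, x·∑_{d ≤ x} (μ²(d)/d²) · ∑_{m ≤ x/d} 1/m = (15/π²)·x·log x + O(x). -/
/-!
Since `μ²(n) = ∑_{d² ∣ n} μ(d)`, the Dirichlet series of `μ²` at `2` factors as
`L(μ, 4) ζ(2) = ζ(2) / ζ(4) = 15 / π²`. With `∑_{m ≤ y} 1/m = log y + O(1)` for `y ≥ 1`, the
inner sum is `log x - log d + O(1)`, so the outer sum is
`(∑_{d ≤ x} μ²(d)/d²) log x - ∑_{d ≤ x} μ²(d) log d / d² + O(1)`. The first factor is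
`15/π² + O(1/x)` and the second sum converges; multiplying by `x` gives the claim.
-/

open Finset Filter Asymptotics

open ArithmeticFunction LSeries
open scoped Real LSeries.notation ArithmeticFunction.Moebius ArithmeticFunction.zeta

theorem Nat.dvd_of_sq_dvd_sq_mul {a b d : ℕ} (ha : Squarefree a) (h : d ^ 2 ∣ b ^ 2 * a) :
    d ∣ b := by
  rcases (d.gcd b).eq_zero_or_pos with hg | hg
  · simp [Nat.gcd_eq_zero_iff.mp hg]
  obtain ⟨g, d', b', hg, hcop, rfl, rfl⟩ := Nat.exists_coprime' hg
  have h' : d' ^ 2 ∣ b' ^ 2 * a := by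
    rw [mul_pow, mul_pow, mul_right_comm] at h
    exact Nat.dvd_of_mul_dvd_mul_right (by positivity) h
  have hd' : d' * d' ∣ a := by
    rw [← sq]
    exact (Nat.Coprime.pow 2 2 hcop).dvd_of_dvd_mul_left h'
  rw [Nat.isUnit_iff.mp (ha d' hd'), one_mul]
  exact Dvd.intro_left b' rfl

theorem Nat.sq_dvd_sq_mul_iff {a b d : ℕ} (ha : Squarefree a) : d ^ 2 ∣ b ^ 2 * a ↔ d ∣ b :=
  ⟨Nat.dvd_of_sq_dvd_sq_mul ha, fun h ↦ (pow_dvd_pow_of_dvd h 2).mul_right a⟩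

theorem Nat.squarefree_sq_mul_iff {a b : ℕ} (ha : Squarefree a) :
    Squarefree (b ^ 2 * a) ↔ b = 1 := by
  refine ⟨fun h ↦ Nat.isUnit_iff.mp (h.of_mul_left b (by rw [sq])), ?_⟩
  rintro rfl
  simpa using ha

noncomputable def moebiusOfSqrt (k : ℕ) : ℂ := if k.sqrt ^ 2 = k then μ k.sqrt else 0

theorem moebiusOfSqrt_sq (d : ℕ) : moebiusOfSqrt (d ^ 2) = μ d := by
  simp [moebiusOfSqrt, Nat.sqrt_eq']

theorem moebiusOfSqrt_eq_zero {k : ℕ} (hk : k ∉ Set.range (· ^ 2)) : moebiusOfSqrt k = 0 :=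
  if_neg fun h ↦ hk ⟨k.sqrt, h⟩

theorem ArithmeticFunction.sum_divisors_moebius {R : Type*} [Ring R] (n : ℕ) :
    ∑ d ∈ n.divisors, (μ d : R) = if n = 1 then 1 else 0 := by
  have h := congrArg (· n) (coe_moebius_mul_coe_zeta (R := R))
  simp only [coe_mul_zeta_apply, intCoe_apply, one_apply] at h
  exact h

/-- Write `n = b ^ 2 * a` with `a` squarefree: the squares dividing `n` are the `d ^ 2` with
`d ∣ b`, so the divisor sum collapses to `∑ d ∣ b, μ d`. -/
theorem sum_divisors_moebiusOfSqrt {n : ℕ} (hn : n ≠ 0) :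
    ∑ k ∈ n.divisors, moebiusOfSqrt k = if Squarefree n then 1 else 0 := by
  obtain ⟨a, b, rfl, ha⟩ := Nat.sq_mul_squarefree n
  have hb : b ≠ 0 := by rintro rfl; simp at hn
  have hsub : b.divisors.image (· ^ 2) ⊆ (b ^ 2 * a).divisors := by
    intro k hk
    obtain ⟨d, hd, rfl⟩ := mem_image.mp hk
    exact Nat.mem_divisors.mpr ⟨(Nat.sq_dvd_sq_mul_iff ha).mpr (Nat.dvd_of_mem_divisors hd), hn⟩
  have hvanish : ∀ k ∈ (b ^ 2 * a).divisors, k ∉ b.divisors.image (· ^ 2) →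
      moebiusOfSqrt k = 0 := by
    rintro k hk hkb
    refine moebiusOfSqrt_eq_zero ?_
    rintro ⟨d, rfl⟩
    refine hkb (mem_image_of_mem _ (Nat.mem_divisors.mpr ⟨?_, hb⟩))
    exact (Nat.sq_dvd_sq_mul_iff ha).mp (Nat.dvd_of_mem_divisors hk)
  rw [← sum_subset hsub hvanish, sum_image fun _ _ _ _ h ↦ Nat.pow_left_injective two_ne_zero h]
  simp only [moebiusOfSqrt_sq, sum_divisors_moebius, Nat.squarefree_sq_mul_iff ha]

theorem LSeriesHasSum.of_comp_sq {f : ℕ → ℂ} {s a : ℂ} (hf : ∀ k ∉ Set.range (· ^ 2), f k = 0)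
    (h : LSeriesHasSum (fun d ↦ f (d ^ 2)) (2 * s) a) : LSeriesHasSum f s a := by
  have hterm : term f s ∘ (· ^ 2) = term (fun d ↦ f (d ^ 2)) (2 * s) := by
    ext d
    rcases eq_or_ne d 0 with rfl | hd
    · simp
    · rw [Function.comp_apply, term_of_ne_zero (pow_ne_zero 2 hd), term_of_ne_zero hd,
        show (2 : ℂ) * s = (2 : ℕ) * s by norm_num, Complex.natCast_cpow_natCast_mul, Nat.cast_pow]
  refine ((Nat.pow_left_injective two_ne_zero).hasSum_iff fun k hk ↦ ?_).mp (hterm ▸ h)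
  rcases eq_or_ne k 0 with rfl | hk0
  · simp
  · rw [term_of_ne_zero hk0, hf k hk, zero_div]

theorem LSeriesHasSum_moebius_four : LSeriesHasSum ↗μ 4 (90 / π ^ 4) := by
  have hs : 1 < (4 : ℂ).re := by norm_num
  have hinv : L ↗μ 4 = 90 / π ^ 4 := by
    have h := LSeries_zeta_mul_Lseries_moebius hs
    rw [LSeries_zeta_eq_riemannZeta hs, riemannZeta_four] at h
    rw [eq_div_iff (by simp [Real.pi_ne_zero])]
    linear_combination 90 * h
  exact hinv ▸ (LSeriesSummable_moebius_iff.mpr hs).LSeriesHasSum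

theorem convolution_moebiusOfSqrt_zeta :
    moebiusOfSqrt ⍟ ↗ζ = fun n ↦ if Squarefree n then 1 else 0 := by
  ext n
  rcases eq_or_ne n 0 with rfl | hn
  · simp [convolution_map_zero]
  rw [convolution_def]
  dsimp only
  rw [Nat.sum_divisorsAntidiagonal (f := fun k m ↦ moebiusOfSqrt k * (ζ m : ℂ)),
    ← sum_divisors_moebiusOfSqrt hn]
  refine sum_congr rfl fun k hk ↦ ?_
  have : n / k ≠ 0 := (Nat.div_pos (Nat.divisor_le hk) (Nat.pos_of_mem_divisors hk)).ne'
  simp [this]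

theorem LSeriesHasSum_squarefree_two :
    LSeriesHasSum (fun n ↦ if Squarefree n then 1 else 0) 2 (15 / π ^ 2) := by
  have hs : 1 < (2 : ℂ).re := by norm_num
  have hsqrt : LSeriesHasSum moebiusOfSqrt 2 (90 / π ^ 4) :=
    .of_comp_sq (fun _ ↦ moebiusOfSqrt_eq_zero)
      (by norm_num [moebiusOfSqrt_sq, LSeriesHasSum_moebius_four])
  have hzeta := LSeriesHasSum_zeta hs
  rw [riemannZeta_two] at hzeta
  convert hsqrt.convolution hzeta using 1
  · exact convolution_moebiusOfSqrt_zeta.symm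
  · field_simp
    ring

theorem hasSum_squarefree_div_sq :
    HasSum (fun n : ℕ ↦ (if Squarefree n then 1 else 0 : ℝ) / n ^ 2) (15 / π ^ 2) := by
  rw [← Complex.hasSum_ofReal]
  have h : HasSum (term (fun n ↦ if Squarefree n then 1 else 0) 2) (15 / π ^ 2) :=
    LSeriesHasSum_squarefree_two
  convert h using 1
  · ext n
    rcases eq_or_ne n 0 with rfl | hn
    · simp
    · simp [term_of_ne_zero hn, apply_ite]
  · norm_cast

theorem sum_Icc_one_div_eq_harmonic (n : ℕ) : ∑ m ∈ Icc 1 n, (1 : ℝ) / m = harmonic n := by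
  simp [harmonic_eq_sum_Icc]

theorem abs_harmonic_floor_sub_log_le {y : ℝ} (hy : 1 ≤ y) :
    |(harmonic ⌊y⌋₊ : ℝ) - Real.log y| ≤ 1 := by
  rw [abs_le]
  constructor <;>
    linarith [log_le_harmonic_floor y (by linarith), harmonic_floor_le_one_add_log y hy]

theorem log_div_sq_le_two_mul_inv_rpow (n : ℕ) :
    Real.log n / n ^ 2 ≤ 2 * ((n : ℝ) ^ (3 / 2 : ℝ))⁻¹ := by
  rcases n.eq_zero_or_pos with rfl | hn
  · simp
  have hn : (0 : ℝ) < n := by exact_mod_cast hn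
  have hsplit : (n : ℝ) ^ 2 = n ^ (1 / 2 : ℝ) * n ^ (3 / 2 : ℝ) := by
    rw [← Real.rpow_add hn]
    norm_num
  rw [hsplit, div_le_iff₀ (by positivity)]
  calc Real.log n ≤ n ^ (1 / 2 : ℝ) / (1 / 2) := Real.log_le_rpow_div hn.le (by norm_num)
    _ = 2 * ((n : ℝ) ^ (3 / 2 : ℝ))⁻¹ * (n ^ (1 / 2 : ℝ) * n ^ (3 / 2 : ℝ)) := by
      field_simp

theorem summable_log_div_sq : Summable fun n : ℕ ↦ Real.log n / n ^ 2 :=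
  .of_nonneg_of_le (fun n ↦ div_nonneg (Real.log_natCast_nonneg n) (by positivity))
    log_div_sq_le_two_mul_inv_rpow
    ((Real.summable_nat_rpow_inv.mpr (by norm_num : (1 : ℝ) < 3 / 2)).mul_left 2)

section

variable {a : ℕ → ℝ} {A : ℝ}

theorem HasSum.sub_sum_Icc_le (ha : ∀ n, a n ≤ ((n : ℝ) ^ 2)⁻¹) (hA : HasSum a A) (N : ℕ) :
    A - ∑ n ∈ Icc 1 N, a n ≤ 2 / (N + 1) := by
  refine le_of_tendsto (hA.tendsto_sum_nat.sub_const _) ?_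
  filter_upwards [eventually_gt_atTop N] with M hM
  have hsub : Icc 1 N ⊆ range M := fun n hn ↦ by simp at hn ⊢; omega
  calc ∑ n ∈ range M, a n - ∑ n ∈ Icc 1 N, a n = ∑ n ∈ range M \ Icc 1 N, a n :=
        (sum_sdiff_eq_sub hsub).symm
    _ ≤ ∑ n ∈ range M \ Icc 1 N, ((n : ℝ) ^ 2)⁻¹ := sum_le_sum fun n _ ↦ ha n
    _ ≤ ∑ n ∈ insert 0 (Ioo N M), ((n : ℝ) ^ 2)⁻¹ :=
        sum_le_sum_of_subset_of_nonneg (fun n hn ↦ by simp at hn ⊢; omega)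
          fun _ _ _ ↦ by positivity
    _ = ∑ n ∈ Ioo N M, ((n : ℝ) ^ 2)⁻¹ := by simp
    _ ≤ 2 / (N + 1) := sum_Ioo_inv_sq_le N M

theorem abs_sum_mul_harmonic_floor_sub_log_le (ha0 : ∀ n, 0 ≤ a n) (x : ℝ) :
    |∑ d ∈ Icc 1 ⌊x⌋₊, a d * ((harmonic ⌊x / d⌋₊ : ℝ) - Real.log (x / d))| ≤
      ∑ d ∈ Icc 1 ⌊x⌋₊, a d := by
  refine (abs_sum_le_sum_abs _ _).trans (sum_le_sum fun d hd ↦ ?_)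
  obtain ⟨hd1, hdx⟩ := mem_Icc.mp hd
  have hxd : 1 ≤ x / d := by
    rw [one_le_div (by positivity)]
    exact (Nat.le_floor_iff' (by omega)).mp hdx
  rw [abs_mul, abs_of_nonneg (ha0 d)]
  exact mul_le_of_le_one_right (ha0 d) (abs_harmonic_floor_sub_log_le hxd)

theorem sum_Icc_mul_log_le_tsum (ha : ∀ n, a n ≤ ((n : ℝ) ^ 2)⁻¹) (N : ℕ) :
    ∑ n ∈ Icc 1 N, a n * Real.log n ≤ ∑' n : ℕ, Real.log n / n ^ 2 := by
  refine (sum_le_sum fun n _ ↦ ?_).trans (summable_log_div_sq.sum_le_tsum _ fun n _ ↦ ?_)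
  · rw [div_eq_inv_mul]
    exact mul_le_mul_of_nonneg_right (ha n) (Real.log_natCast_nonneg n)
  · exact div_nonneg (Real.log_natCast_nonneg n) (by positivity)

/-- Writing `log (x / d) = log x - log d`, the error splits into the harmonic-sum errors, the
convergent sum `∑ a d log d`, and the tail `∑_{d > x} a d ≤ 2 / x` weighted by `log x ≤ x`. -/
theorem abs_sum_mul_harmonic_floor_sub_le (ha0 : ∀ n, 0 ≤ a n)
    (ha : ∀ n, a n ≤ ((n : ℝ) ^ 2)⁻¹) (hA : HasSum a A) {x : ℝ} (hx : 1 ≤ x) :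
    |∑ d ∈ Icc 1 ⌊x⌋₊, a d * harmonic ⌊x / d⌋₊ - A * Real.log x| ≤
      A + (∑' n : ℕ, Real.log n / n ^ 2) + 2 := by
  set N := ⌊x⌋₊
  have hsplit : ∑ d ∈ Icc 1 N, a d * ((harmonic ⌊x / d⌋₊ : ℝ) - Real.log (x / d)) =
      ∑ d ∈ Icc 1 N, a d * harmonic ⌊x / d⌋₊ - (∑ d ∈ Icc 1 N, a d) * Real.log x +
        ∑ d ∈ Icc 1 N, a d * Real.log d := by
    rw [sum_mul, ← sum_sub_distrib, ← sum_add_distrib]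
    refine sum_congr rfl fun d hd ↦ ?_
    rw [Real.log_div (by positivity) (Nat.cast_pos.mpr (mem_Icc.mp hd).1).ne']
    ring
  have hharm := abs_le.mp (abs_sum_mul_harmonic_floor_sub_log_le ha0 x)
  have hS : ∑ d ∈ Icc 1 N, a d ≤ A := sum_le_hasSum _ (fun n _ ↦ ha0 n) hA
  have hlog0 : 0 ≤ ∑ d ∈ Icc 1 N, a d * Real.log d :=
    sum_nonneg fun d _ ↦ mul_nonneg (ha0 d) (Real.log_natCast_nonneg d)
  have hlog := sum_Icc_mul_log_le_tsum ha N
  have htail0 : 0 ≤ (A - ∑ d ∈ Icc 1 N, a d) * Real.log x :=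
    mul_nonneg (by linarith) (Real.log_nonneg hx)
  have htail : (A - ∑ d ∈ Icc 1 N, a d) * Real.log x ≤ 2 := by
    calc (A - ∑ d ∈ Icc 1 N, a d) * Real.log x ≤ 2 / (N + 1) * x :=
          mul_le_mul (hA.sub_sum_Icc_le ha N) (Real.log_le_self (by linarith))
            (Real.log_nonneg hx) (by positivity)
      _ ≤ 2 := by
          rw [div_mul_eq_mul_div, div_le_iff₀ (by positivity)]
          linarith [Nat.lt_floor_add_one x]
  rw [abs_le]
  constructor <;> linarith

theorem isBigO_mul_sum_mul_sum_one_div_sub (ha0 : ∀ n, 0 ≤ a n)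
    (ha : ∀ n, a n ≤ ((n : ℝ) ^ 2)⁻¹) (hA : HasSum a A) :
    (fun x : ℝ ↦ x * ∑ d ∈ Icc 1 ⌊x⌋₊, a d * ∑ m ∈ Icc 1 ⌊x / (d : ℝ)⌋₊, (1 : ℝ) / m -
      A * x * Real.log x) =O[atTop] fun x ↦ x := by
  refine isBigO_iff.mpr ⟨A + (∑' n : ℕ, Real.log n / n ^ 2) + 2, ?_⟩
  filter_upwards [eventually_ge_atTop 1] with x hx
  simp only [sum_Icc_one_div_eq_harmonic, Real.norm_eq_abs]
  rw [show ∀ S : ℝ, x * S - A * x * Real.log x = x * (S - A * Real.log x) by intro; ring,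
    abs_mul, mul_comm]
  exact mul_le_mul_of_nonneg_right (abs_sum_mul_harmonic_floor_sub_le ha0 ha hA hx)
    (abs_nonneg x)

end

theorem sum_squarefree_harmonic :
    (fun x : ℝ => x * ∑ d ∈ Finset.Icc 1 ⌊x⌋₊,
        (if Squarefree d then 1 else 0 : ℝ) / (d : ℝ) ^ 2 *
        ∑ m ∈ Finset.Icc 1 ⌊x / (d : ℝ)⌋₊, (1 : ℝ) / m -
      (15 / Real.pi ^ 2) * x * Real.log x) =O[atTop] (fun x : ℝ => x) := by
  refine isBigO_mul_sum_mul_sum_one_div_sub (fun n ↦ by positivity) (fun n ↦ ?_)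
    hasSum_squarefree_div_sq
  split_ifs <;> simp
end
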